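/- Let K be an infinite compact Hausdorff space whose topology is the order topology of some linear order on K. Then the closed unit ball of C(K) contains a 2-equilateral set of cardinality w(K). -/

import Mathlib

/-!
Call points `x i` and closed sets `C i` separated if `x i ∉ C i` and, for `i ≠ j`, `x i ∈ C j` or
`x j ∈ C i`. Urysohn functions equal to `1` at `x i` and `-1` on `C i` are then pairwise at
distance `2`. In a linear order the covering pairs `a ⋖ b` give the separated family `(a, Ici b)`;
if no dense set is smaller than `w(K)`, a left-separated sequence `x` of length `w(K)` gives
`(x i, closure {x j | j < i})`. One of the two families has size at least `w(K)`, because the open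
rays with endpoints in a dense set or in a covering pair generate the topology.
-/

open Cardinal Set TopologicalSpace

universe u

noncomputable def weight (X : Type u) [TopologicalSpace X] : Cardinal.{u} :=
  ⨅ B : {B : Set (Set X) // TopologicalSpace.IsTopologicalBasis B}, max #B.1 ℵ₀

section Weight

variable {X : Type u} [t : TopologicalSpace X]

theorem weight_le_of_isTopologicalBasis {B : Set (Set X)} (hB : IsTopologicalBasis B) :
    weight X ≤ max #B ℵ₀ :=
  ciInf_le (OrderBot.bddBelow _) (⟨B, hB⟩ : {B : Set (Set X) // IsTopologicalBasis B})

theorem mk_finset_le_max (α : Type u) : #(Finset α) ≤ max ℵ₀ #α := by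
  classical
  exact (mk_le_of_surjective List.toFinset_surjective).trans (mk_list_le_max α)

theorem weight_le_of_eq_generateFrom {s : Set (Set X)} (h : t = generateFrom s) :
    weight X ≤ max #s ℵ₀ := by
  refine (weight_le_of_isTopologicalBasis (isTopologicalBasis_of_subbasis h)).trans
    (max_le ?_ le_sup_right)
  have hsub : (fun f => ⋂₀ f) '' {f : Set (Set X) | f.Finite ∧ f ⊆ s} ⊆
      range fun F : Finset s => ⋂₀ ((↑) '' (F : Set s)) := by
    rintro _ ⟨f, ⟨hf, hfs⟩, rfl⟩
    refine ⟨(hf.preimage Subtype.val_injective.injOn).toFinset, ?_⟩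
    simp only [Finite.coe_toFinset, Subtype.image_preimage_coe, inter_eq_right.2 hfs]
  calc #((fun f => ⋂₀ f) '' {f : Set (Set X) | f.Finite ∧ f ⊆ s})
      ≤ #(Finset s) := (mk_le_mk_of_subset hsub).trans mk_range_le
    _ ≤ max #s ℵ₀ := (mk_finset_le_max s).trans_eq (max_comm _ _)

theorem Dense.aleph0_le_mk [T1Space X] [Infinite X] {S : Set X} (hS : Dense S) : ℵ₀ ≤ #S := by
  by_contra! h
  have hfin : S.Finite := lt_aleph0_iff_set_finite.1 h
  exact infinite_univ (hS.closure_eq ▸ hfin.isClosed.closure_eq ▸ hfin)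

theorem exists_left_separated {c : Cardinal.{u}} (hc : ∀ S : Set X, Dense S → c ≤ #S) :
    ∃ x : c.ord.ToType → X, ∀ i, x i ∉ closure (x '' Iio i) := by
  have step : ∀ (i : c.ord.ToType) (prev : ∀ j, j < i → X),
      ∃ y, y ∉ closure (range fun j : Iio i => prev j j.2) := by
    intro i prev
    by_contra! h
    exact (hc _ h).not_gt (mk_range_le.trans_lt (by simpa using mk_Iio_lt i (by simp)))
  choose next hnext using step
  let x : c.ord.ToType → X := WellFoundedLT.fix next
  refine ⟨x, fun i => ?_⟩
  have hx : x i = next i fun j _ => x j := WellFoundedLT.fix_eq _ i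
  rw [hx, image_eq_range]
  exact hnext i fun j _ => x j

end Weight

section OrderTopology

variable {K : Type u} [LinearOrder K]

theorem CovBy.le_or_le_of_ne {a b c d : K} (hab : a ⋖ b) (hcd : c ⋖ d) (hne : (a, b) ≠ (c, d)) :
    b ≤ c ∨ d ≤ a := by
  rcases lt_trichotomy a c with h | rfl | h
  · exact Or.inl (hab.ge_of_gt h)
  · exact absurd (by rw [hab.unique_right hcd]) hne
  · exact Or.inr (hcd.ge_of_gt h)

variable [t : TopologicalSpace K] [OrderTopology K]

theorem Ioi_eq_biUnion_of_dense {E : Set K} (hE : Dense E) (hcov : ∀ a b, a ⋖ b → a ∈ E) (a : K) :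
    Ioi a = ⋃ e ∈ E ∩ Ici a, Ioi e := by
  ext y
  simp only [mem_iUnion, mem_Ioi, mem_inter_iff, mem_Ici, exists_prop]
  refine ⟨fun hay => ?_, fun ⟨e, ⟨_, hae⟩, hey⟩ => hae.trans_lt hey⟩
  rcases (Ioo a y).eq_empty_or_nonempty with h | h
  · exact ⟨a, ⟨hcov a y (covBy_iff_Ioo_eq.2 ⟨hay, h⟩), le_rfl⟩, hay⟩
  · obtain ⟨e, heE, hae, hey⟩ := hE.exists_mem_open isOpen_Ioo h
    exact ⟨e, ⟨heE, hae.le⟩, hey⟩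

theorem Iio_eq_biUnion_of_dense {E : Set K} (hE : Dense E) (hcov : ∀ a b, a ⋖ b → b ∈ E) (b : K) :
    Iio b = ⋃ e ∈ E ∩ Iic b, Iio e := by
  ext y
  simp only [mem_iUnion, mem_Iio, mem_inter_iff, mem_Iic, exists_prop]
  refine ⟨fun hyb => ?_, fun ⟨e, ⟨_, heb⟩, hye⟩ => hye.trans_le heb⟩
  rcases (Ioo y b).eq_empty_or_nonempty with h | h
  · exact ⟨b, ⟨hcov y b (covBy_iff_Ioo_eq.2 ⟨hyb, h⟩), le_rfl⟩, hyb⟩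
  · obtain ⟨e, heE, hye, heb⟩ := hE.exists_mem_open isOpen_Ioo h
    exact ⟨e, ⟨heE, heb.le⟩, hye⟩

theorem topology_eq_generateFrom_of_dense_of_covBy {E : Set K} (hE : Dense E)
    (hcov : ∀ a b, a ⋖ b → a ∈ E ∧ b ∈ E) :
    t = generateFrom (Ioi '' E ∪ Iio '' E) := by
  refine (OrderTopology.topology_eq_generate_intervals (α := K)).trans ?_
  refine le_antisymm (generateFrom_anti ?_) (le_generateFrom ?_)
  · simp only [union_subset_iff, image_subset_iff]
    exact ⟨fun a _ => ⟨a, .inl rfl⟩, fun a _ => ⟨a, .inr rfl⟩⟩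
  · rintro _ ⟨a, rfl | rfl⟩
    · rw [Ioi_eq_biUnion_of_dense hE (fun a b h => (hcov a b h).1)]
      let _ := generateFrom (Ioi '' E ∪ Iio '' E)
      exact isOpen_biUnion fun e he => .basic _ (.inl (mem_image_of_mem _ he.1))
    · rw [Iio_eq_biUnion_of_dense hE (fun a b h => (hcov a b h).2)]
      let _ := generateFrom (Ioi '' E ∪ Iio '' E)
      exact isOpen_biUnion fun e he => .basic _ (.inr (mem_image_of_mem _ he.1))

theorem weight_le_max_mk_of_dense {S : Set K} (hS : Dense S) :
    weight K ≤ max (max #S #{p : K × K | p.1 ⋖ p.2}) ℵ₀ := by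
  set J := {p : K × K | p.1 ⋖ p.2}
  set m := max (max #S #J) ℵ₀
  have hm : ℵ₀ ≤ m := le_max_right _ _
  have hJ : #J ≤ m := (le_max_right _ _).trans (le_max_left _ _)
  let E := S ∪ Prod.fst '' J ∪ Prod.snd '' J
  have hEm : #E ≤ m :=
    (mk_union_le _ _).trans <| add_le_of_le hm
      ((mk_union_le _ _).trans <| add_le_of_le hm ((le_max_left _ _).trans (le_max_left _ _))
        (mk_image_le.trans hJ))
      (mk_image_le.trans hJ)
  have hE : Dense E := hS.mono (subset_union_left.trans subset_union_left)
  have hcov : ∀ a b, a ⋖ b → a ∈ E ∧ b ∈ E := fun a b h =>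
    ⟨.inl (.inr ⟨(a, b), h, rfl⟩), .inr ⟨(a, b), h, rfl⟩⟩
  refine (weight_le_of_eq_generateFrom (topology_eq_generateFrom_of_dense_of_covBy hE hcov)).trans
    (max_le ?_ hm)
  exact (mk_union_le _ _).trans (add_le_of_le hm (mk_image_le.trans hEm) (mk_image_le.trans hEm))

end OrderTopology

section Equilateral

variable {K : Type u} [TopologicalSpace K] [CompactSpace K]

theorem exists_continuousMap_norm_le_one_eq_one_eq_neg_one [T2Space K] {x : K} {C : Set K}
    (hC : IsClosed C) (hx : x ∉ C) : ∃ f : C(K, ℝ), ‖f‖ ≤ 1 ∧ f x = 1 ∧ ∀ z ∈ C, f z = -1 := by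
  obtain ⟨f, hfC, hfx, hf⟩ := exists_bounded_mem_Icc_of_closed_of_le hC isClosed_singleton
    (disjoint_singleton_right.2 hx) (by norm_num : (-1 : ℝ) ≤ 1)
  refine ⟨f.toContinuousMap, (ContinuousMap.norm_le _ zero_le_one).2 fun z => ?_,
    hfx (mem_singleton x), fun z hz => hfC hz⟩
  exact abs_le.2 (hf z)

theorem norm_sub_eq_two_of_eq_one_of_eq_neg_one {f g : C(K, ℝ)} (hf : ‖f‖ ≤ 1) (hg : ‖g‖ ≤ 1)
    {x : K} (hfx : f x = 1) (hgx : g x = -1) : ‖f - g‖ = 2 := by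
  refine le_antisymm ((norm_sub_le f g).trans (by linarith)) ?_
  have := (f - g).norm_coe_le_norm x
  rw [ContinuousMap.sub_apply, hfx, hgx] at this
  norm_num at this
  exact this

theorem exists_pairwise_norm_sub_eq_two_of_separated [T2Space K] {I : Type u} (x : I → K)
    (C : I → Set K) (hC : ∀ i, IsClosed (C i)) (hx : ∀ i, x i ∉ C i)
    (hsep : ∀ i j, i ≠ j → x i ∈ C j ∨ x j ∈ C i) :
    ∃ A : Set C(K, ℝ), A ⊆ Metric.closedBall 0 1 ∧ #A = #I ∧ A.Pairwise (‖· - ·‖ = 2) := by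
  choose f hf hfx hfC using
    fun i => exists_continuousMap_norm_le_one_eq_one_eq_neg_one (hC i) (hx i)
  have hdist : ∀ i j, i ≠ j → ‖f i - f j‖ = 2 := by
    intro i j hij
    rcases hsep i j hij with h | h
    · exact norm_sub_eq_two_of_eq_one_of_eq_neg_one (hf i) (hf j) (hfx i) (hfC j _ h)
    · rw [norm_sub_rev]
      exact norm_sub_eq_two_of_eq_one_of_eq_neg_one (hf j) (hf i) (hfx j) (hfC i _ h)
  have hinj : Function.Injective f := fun i j h => by
    by_contra hij
    simpa [h] using hdist i j hij
  refine ⟨range f, ?_, mk_range_eq f hinj, ?_⟩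
  · rintro _ ⟨i, rfl⟩
    simpa using hf i
  · rintro _ ⟨i, rfl⟩ _ ⟨j, rfl⟩ hne
    exact hdist i j (ne_of_apply_ne f hne)

end Equilateral

theorem exists_separated_family_weight_le_mk (K : Type u) [LinearOrder K] [TopologicalSpace K]
    [OrderTopology K] [Infinite K] :
    ∃ (I : Type u) (x : I → K) (C : I → Set K), weight K ≤ #I ∧ (∀ i, IsClosed (C i)) ∧
      (∀ i, x i ∉ C i) ∧ ∀ i j, i ≠ j → x i ∈ C j ∨ x j ∈ C i := by
  by_cases h : ∀ S : Set K, Dense S → weight K ≤ #S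
  · obtain ⟨x, hx⟩ := exists_left_separated h
    refine ⟨(weight K).ord.ToType, x, fun i => closure (x '' Iio i), by rw [mk_toType, card_ord],
      fun _ => isClosed_closure, hx, fun i j hij => ?_⟩
    rcases hij.lt_or_gt with h | h
    · exact Or.inl (subset_closure (mem_image_of_mem x h))
    · exact Or.inr (subset_closure (mem_image_of_mem x h))
  · push Not at h
    obtain ⟨S, hS, hSw⟩ := h
    have hJ : weight K ≤ #{p : K × K | p.1 ⋖ p.2} := by
      by_contra! hJ
      exact (weight_le_max_mk_of_dense hS).not_gt
        (max_lt (max_lt hSw hJ) (hS.aleph0_le_mk.trans_lt hSw))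
    refine ⟨{p : K × K | p.1 ⋖ p.2}, fun p => p.1.1, fun p => Ici p.1.2, hJ,
      fun _ => isClosed_Ici, fun p => not_le.2 p.2.lt, fun p q hpq => ?_⟩
    rcases CovBy.le_or_le_of_ne p.2 q.2 (Subtype.coe_injective.ne hpq) with h | h
    exacts [Or.inr h, Or.inl h]

/-- If `K` is an infinite compact line (a linearly ordered set, compact in its order topology),
then the closed unit ball of `C(K)` contains a `2`-equilateral set of cardinality `w(K)`. -/
theorem statement10 (K : Type u) [LinearOrder K] [TopologicalSpace K] [OrderTopology K]
    [CompactSpace K] [Infinite K] :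
    ∃ A : Set C(K, ℝ), A ⊆ Metric.closedBall 0 1 ∧ #A = weight K ∧
      ∀ f ∈ A, ∀ g ∈ A, f ≠ g → ‖f - g‖ = 2 := by
  obtain ⟨I, x, C, hI, hC, hx, hsep⟩ := exists_separated_family_weight_le_mk K
  obtain ⟨A, hA, hAI, hA2⟩ := exists_pairwise_norm_sub_eq_two_of_separated x C hC hx hsep
  obtain ⟨B, hBA, hB⟩ := le_mk_iff_exists_subset.1 (hAI ▸ hI)
  exact ⟨B, hBA.trans hA, hB, hA2.mono hBA⟩
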